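/- arXiv:2102.10773 — 10 statements merged into one kernel-verified Lean document; each statement's English description precedes it below -/
import Mathlib

section
/- Let n ∈ ℕ, λ > 0, let M ∈ ℝ^{n×n} be a symmetric positive semidefinite matrix, let z ∈ {0,1}ⁿ be a binary vector, and let Z = diag(z). Then λI + ZMZ and λI + ZM are invertible and (λI + ZMZ)^{-1}Z = (λI + ZM)^{-1}Z. -/
/-! Since `Z` is idempotent, `Z` commutes with `A = λI + ZMZ` and `(λI + ZM) Z = A Z`; hence
`(λI + ZM) A⁻¹ Z = Z`. Invertibility of `A` comes from positive definiteness, that of `λI + ZM`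
from `det (λI + Z (ZM)) = det (λI + (ZM) Z)` (Weinstein–Aronszajn). -/

namespace Matrix

variable {n : Type*} [Fintype n] [DecidableEq n]

theorem isIdempotentElem_diagonal {R : Type*} [Semiring R] {d : n → R}
    (hd : ∀ i, IsIdempotentElem (d i)) : IsIdempotentElem (diagonal d) := by
  rw [IsIdempotentElem, diagonal_mul_diagonal]
  exact congrArg diagonal (funext hd)

theorem det_smul_one_add_mul_comm {K : Type*} [Field K] (c : K) (X Y : Matrix n n K) :
    det (c • 1 + X * Y) = det (c • 1 + Y * X) := by
  rcases eq_or_ne c 0 with rfl | hc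
  · simp only [zero_smul, zero_add, det_mul, mul_comm]
  have factor (P : Matrix n n K) : c • 1 + P = c • (1 + c⁻¹ • P) := by
    rw [smul_add, smul_smul, mul_inv_cancel₀ hc, one_smul]
  rw [factor, factor, det_smul, det_smul, ← smul_mul_assoc, ← mul_smul_comm,
    det_one_add_mul_comm]

section Idempotent

variable {R : Type*} [CommRing R] {Z : Matrix n n R}

theorem commute_smul_one_add_mul_mul_self (hZ : IsIdempotentElem Z) (c : R)
    (M : Matrix n n R) : Commute Z (c • 1 + Z * M * Z) := by
  refine ((Commute.one_right Z).smul_right c).add_right ?_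
  show Z * (Z * M * Z) = Z * M * Z * Z
  rw [← mul_assoc, ← mul_assoc, hZ.eq, mul_assoc _ Z Z, hZ.eq]

theorem smul_one_add_mul_mul_eq_of_isIdempotentElem (hZ : IsIdempotentElem Z) (c : R)
    (M : Matrix n n R) : (c • 1 + Z * M) * Z = (c • 1 + Z * M * Z) * Z := by
  rw [add_mul, add_mul, mul_assoc (Z * M) Z Z, hZ.eq]

theorem inv_smul_one_add_mul_mul_self_mul_self (hZ : IsIdempotentElem Z) {c : R}
    {M : Matrix n n R} (hA : IsUnit (c • 1 + Z * M * Z))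
    (hB : IsUnit (c • 1 + Z * M)) :
    (c • 1 + Z * M * Z)⁻¹ * Z = (c • 1 + Z * M)⁻¹ * Z := by
  set A := c • 1 + Z * M * Z
  set B := c • 1 + Z * M
  have hZA : Commute Z A := commute_smul_one_add_mul_mul_self hZ c M
  have hZA_inv : Commute Z A⁻¹ := by
    simpa only [coe_units_inv, IsUnit.unit_spec] using
      (show Commute Z hA.unit from hZA).units_inv_right
  have hBAZ : B * (A⁻¹ * Z) = Z := by
    rw [← hZA_inv.eq, ← mul_assoc, smul_one_add_mul_mul_eq_of_isIdempotentElem hZ c M,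
      ← hZA.eq, mul_assoc, mul_nonsing_inv _ ((isUnit_iff_isUnit_det A).mp hA), mul_one]
  calc A⁻¹ * Z = B⁻¹ * (B * (A⁻¹ * Z)) :=
        (nonsing_inv_mul_cancel_left _ _ ((isUnit_iff_isUnit_det B).mp hB)).symm
    _ = B⁻¹ * Z := by rw [hBAZ]

end Idempotent

theorem isUnit_smul_one_add_mul_of_isIdempotentElem {K : Type*} [Field K]
    {Z M : Matrix n n K} (hZ : IsIdempotentElem Z) {c : K}
    (hA : IsUnit (c • 1 + Z * M * Z)) : IsUnit (c • 1 + Z * M) := by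
  rw [isUnit_iff_isUnit_det] at hA ⊢
  rwa [show Z * M = Z * (Z * M) by rw [← mul_assoc, hZ.eq], det_smul_one_add_mul_comm]

end Matrix

theorem binary_equiv (n : ℕ) (lam : ℝ) (hlam : 0 < lam)
    (M : Matrix (Fin n) (Fin n) ℝ) (hM : M.PosSemidef)
    (z : Fin n → ℝ) (hz : ∀ i, z i = 0 ∨ z i = 1) :
    IsUnit (lam • (1 : Matrix (Fin n) (Fin n) ℝ) +
      Matrix.diagonal z * M * Matrix.diagonal z) ∧
    IsUnit (lam • (1 : Matrix (Fin n) (Fin n) ℝ) + Matrix.diagonal z * M) ∧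
    (lam • (1 : Matrix (Fin n) (Fin n) ℝ) +
        Matrix.diagonal z * M * Matrix.diagonal z)⁻¹ * Matrix.diagonal z =
      (lam • (1 : Matrix (Fin n) (Fin n) ℝ) + Matrix.diagonal z * M)⁻¹ *
        Matrix.diagonal z := by
  have hZ : IsIdempotentElem (Matrix.diagonal z) :=
    Matrix.isIdempotentElem_diagonal fun i => IsIdempotentElem.iff_eq_zero_or_one.mpr (hz i)
  have hZMZ : (Matrix.diagonal z * M * Matrix.diagonal z).PosSemidef := by
    simpa [Matrix.diagonal_conjTranspose] using hM.mul_mul_conjTranspose_same (Matrix.diagonal z)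
  have hA := ((Matrix.PosDef.one.smul hlam).add_posSemidef hZMZ).isUnit
  have hB := Matrix.isUnit_smul_one_add_mul_of_isIdempotentElem hZ hA
  exact ⟨hA, hB, Matrix.inv_smul_one_add_mul_mul_self_mul_self hZ hA hB⟩
end

section
/- Let n ∈ ℕ, λ > 0, let M ∈ ℝ^{n×n} be a symmetric positive semidefinite matrix, let z ∈ {0,1}ⁿ be a binary vector, and let Z = diag(z). If B ∈ ℝ^{n×n} is any Moore–Penrose pseudoinverse of A = Z(M + λI)Z (i.e., ABA = A, BAB = B, (AB)ᵀ = AB, (BA)ᵀ = BA), then BZ = (λI + ZM)^{-1}Z. -/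
/-!
With `C = λI + ZM` one has `A = CZ = ZCᵀ`. The matrix `C` is invertible: a kernel vector `v`
satisfies `λv = -ZMv`, so `Zv = v`, and then `0 = vᵀCv = λ‖v‖² + vᵀMv`. Cancelling `C` in
`ABA = A` gives `ZBA = Z`; transposing and using the symmetry of `BA` yields `BA = Z`.
Hence `BZCᵀ = Z`, i.e. `BZ = Z(Cᵀ)⁻¹ = C⁻¹Z`, the last step because `CZ = ZCᵀ`.
-/

open Matrix

namespace Matrix

variable {n R : Type*} [Fintype n] [DecidableEq n]

theorem isIdempotentElem_diagonal_of_forall_eq_zero_or_one [Semiring R]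
    {z : n → R} (hz : ∀ i, z i = 0 ∨ z i = 1) : IsIdempotentElem (diagonal z) := by
  rw [IsIdempotentElem, diagonal_mul_diagonal]
  congr 1 with i
  rcases hz i with h | h <;> simp [h]

section CommRing

variable [CommRing R]

theorem smul_one_add_mul_mul_eq_mul_add_smul_one_mul {Z : Matrix n n R} (hZ : IsIdempotentElem Z)
    (M : Matrix n n R) (c : R) : (c • 1 + Z * M) * Z = Z * (M + c • 1) * Z := by
  simp only [add_mul, mul_add, Matrix.mul_smul, Matrix.smul_mul, Matrix.mul_one, Matrix.one_mul,
    hZ.eq, add_comm]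

theorem mul_transpose_smul_one_add_mul {Z M : Matrix n n R} (hZ : IsIdempotentElem Z)
    (hZs : Z.IsSymm) (hMs : M.IsSymm) (c : R) :
    Z * (c • 1 + Z * M)ᵀ = Z * (M + c • 1) * Z := by
  rw [transpose_add, transpose_mul, hZs.eq, hMs.eq, transpose_smul, transpose_one]
  simp only [add_mul, mul_add, Matrix.mul_smul, Matrix.smul_mul, Matrix.mul_one,
    ← Matrix.mul_assoc, hZ.eq, add_comm]

theorem inv_mul_eq_mul_inv_of_mul_eq_mul {C D P : Matrix n n R} (hC : IsUnit C.det)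
    (hD : IsUnit D.det) (h : C * P = P * D) : C⁻¹ * P = P * D⁻¹ := by
  calc C⁻¹ * P = C⁻¹ * (P * D) * D⁻¹ := by rw [Matrix.mul_assoc, mul_nonsing_inv_cancel_right _ _ hD]
    _ = P * D⁻¹ := by rw [← h, nonsing_inv_mul_cancel_left _ _ hC]

theorem mul_eq_of_eq_isUnit_mul {A B C P : Matrix n n R} (hC : IsUnit C.det) (hA : A = C * P)
    (hP : IsIdempotentElem P) (hPs : P.IsSymm) (hABA : A * B * A = A) (hBA : (B * A)ᵀ = B * A) :
    B * A = P := by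
  have hPBA : P * (B * A) = P :=
    ((isUnit_iff_isUnit_det C).mpr hC).mul_left_cancel <| by
      rw [← Matrix.mul_assoc, ← Matrix.mul_assoc, ← hA, hABA, hA]
  have hAP : A * P = A := by rw [hA, Matrix.mul_assoc, hP.eq]
  calc B * A = B * A * P := by rw [Matrix.mul_assoc, hAP]
    _ = P := by rw [← hBA, ← hPs.eq, ← transpose_mul, hPBA, hPs.eq]

end CommRing

theorem isUnit_det_smul_one_add_mul {Z M : Matrix n n ℝ} {c : ℝ} (hc : 0 < c)
    (hM : M.PosSemidef) (hZ : IsIdempotentElem Z) (hZs : Z.IsSymm) :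
    IsUnit (c • 1 + Z * M).det := by
  rw [isUnit_iff_ne_zero, Ne, ← exists_mulVec_eq_zero_iff]
  rintro ⟨v, hv0, hv⟩
  rw [add_mulVec, smul_mulVec, one_mulVec, ← mulVec_mulVec] at hv
  -- `c • v = -Z (M v)` lies in the range of the projection `Z`
  have hZv : Z *ᵥ v = v := by
    have := congrArg (Z *ᵥ ·) hv
    rw [mulVec_add, mulVec_smul, mulVec_mulVec (M *ᵥ v) Z Z, hZ.eq, mulVec_zero] at this
    exact smul_right_injective _ hc.ne' (add_right_cancel (this.trans hv.symm))
  have hquad : c * (v ⬝ᵥ v) + v ⬝ᵥ M *ᵥ v = 0 := by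
    have := congrArg (v ⬝ᵥ ·) hv
    rwa [dotProduct_add, dotProduct_smul, dotProduct_mulVec, ← mulVec_transpose, hZs.eq, hZv,
      dotProduct_zero, smul_eq_mul] at this
  have hMv : 0 ≤ v ⬝ᵥ M *ᵥ v := by simpa using hM.dotProduct_mulVec_nonneg v
  have hvv : 0 ≤ v ⬝ᵥ v := Fintype.sum_nonneg fun i => mul_self_nonneg (v i)
  exact hv0 (dotProduct_self_eq_zero.mp (by nlinarith))

end Matrix

theorem pseudoinverse_relaxation_general (n : ℕ) (lam : ℝ) (hlam : 0 < lam)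
    (M : Matrix (Fin n) (Fin n) ℝ) (hM : M.PosSemidef)
    (z : Fin n → ℝ) (hz : ∀ i, z i = 0 ∨ z i = 1)
    (Z : Matrix (Fin n) (Fin n) ℝ) (hZ : Z = Matrix.diagonal z)
    (A B : Matrix (Fin n) (Fin n) ℝ)
    (hA : A = Z * (M + lam • (1 : Matrix (Fin n) (Fin n) ℝ)) * Z)
    (h1 : A * B * A = A) (h4 : (B * A)ᵀ = B * A) :
    B * Z = (lam • (1 : Matrix (Fin n) (Fin n) ℝ) + Z * M)⁻¹ * Z := by
  have hZi : IsIdempotentElem Z := hZ ▸ isIdempotentElem_diagonal_of_forall_eq_zero_or_one hz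
  have hZs : Z.IsSymm := hZ ▸ isSymm_diagonal z
  set C := lam • (1 : Matrix (Fin n) (Fin n) ℝ) + Z * M
  have hC : IsUnit C.det := isUnit_det_smul_one_add_mul hlam hM hZi hZs
  have hCt : IsUnit Cᵀ.det := by rwa [det_transpose]
  have hCZ : A = C * Z := hA.trans (smul_one_add_mul_mul_eq_mul_add_smul_one_mul hZi M lam).symm
  have hZC : A = Z * Cᵀ := hA.trans (mul_transpose_smul_one_add_mul hZi hZs hM.1 lam).symm
  have hBA : B * A = Z := mul_eq_of_eq_isUnit_mul hC hCZ hZi hZs h1 h4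
  calc B * Z = B * Z * Cᵀ * Cᵀ⁻¹ := (mul_nonsing_inv_cancel_right _ _ hCt).symm
    _ = Z * Cᵀ⁻¹ := by rw [Matrix.mul_assoc B, ← hZC, hBA]
    _ = C⁻¹ * Z := (inv_mul_eq_mul_inv_of_mul_eq_mul hC hCt (hCZ.symm.trans hZC)).symm

theorem pseudoinverse_relaxation (n : ℕ) (lam : ℝ) (hlam : 0 < lam)
    (M : Matrix (Fin n) (Fin n) ℝ) (hM : M.PosSemidef)
    (z : Fin n → ℝ) (hz : ∀ i, z i = 0 ∨ z i = 1)
    (Z : Matrix (Fin n) (Fin n) ℝ) (hZ : Z = Matrix.diagonal z)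
    (A B : Matrix (Fin n) (Fin n) ℝ)
    (hA : A = Z * (M + lam • (1 : Matrix (Fin n) (Fin n) ℝ)) * Z)
    (h1 : A * B * A = A) (h2 : B * A * B = B)
    (h3 : (A * B)ᵀ = A * B) (h4 : (B * A)ᵀ = B * A) :
    B * Z = (lam • (1 : Matrix (Fin n) (Fin n) ℝ) + Z * M)⁻¹ * Z :=
  pseudoinverse_relaxation_general n lam hlam M hM z hz Z hZ A B hA h1 h4
end

section
/- Let n ∈ ℕ, λ > 0, let M ∈ ℝ^{n×n} be a symmetric positive semidefinite matrix, let z ∈ {0,1}ⁿ be a binary vector, and let Z = diag(z). If B ∈ ℝ^{n×n} is any Moore–Penrose pseudoinverse of A = Z(M + λI)Z (i.e., ABA = A, BAB = B, (AB)ᵀ = AB, (BA)ᵀ = BA), then BZ = (λI + ZMZ)^{-1}Z. -/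
/-!
The Moore–Penrose inverse is unique, so it suffices to exhibit one. With `C = λI + ZMZ`, which is
positive definite and hence invertible, the idempotence of `Z` gives `CZ = ZC = A`. For a unit `C`
commuting with a self-adjoint idempotent `Z`, the matrix `C⁻¹Z` satisfies `A(C⁻¹Z) = (C⁻¹Z)A = Z`,
from which all four Penrose equations follow. Hence `B = C⁻¹Z`, and `BZ = C⁻¹Z` as `Z² = Z`.
-/

open Matrix

structure IsMoorePenroseInverse {R : Type*} [Mul R] [Star R] (a b : R) : Prop where
  mul_mul_self : a * b * a = a
  mul_mul_self' : b * a * b = b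
  isSelfAdjoint_mul : IsSelfAdjoint (a * b)
  isSelfAdjoint_mul' : IsSelfAdjoint (b * a)

namespace IsMoorePenroseInverse

variable {R : Type*} [Semigroup R] [StarMul R] {a b c : R}

theorem eq_mul_mul (hb : IsMoorePenroseInverse a b) (hc : IsMoorePenroseInverse a c) :
    b = b * a * c := by
  have ha : star a = star a * star c * star a := by
    rw [← star_mul, ← star_mul, ← mul_assoc, hc.mul_mul_self]
  calc b = b * (a * b) := by rw [← mul_assoc, hb.mul_mul_self']
    _ = b * (star b * star a) := by rw [← star_mul, hb.isSelfAdjoint_mul.star_eq]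
    _ = b * star (a * b) * star (a * c) := by
      rw [ha, star_mul, star_mul a c]; simp only [mul_assoc]
    _ = b * a * c := by
      rw [hb.isSelfAdjoint_mul.star_eq, hc.isSelfAdjoint_mul.star_eq]
      simp only [← mul_assoc, hb.mul_mul_self']

theorem eq_mul_mul' (hb : IsMoorePenroseInverse a b) (hc : IsMoorePenroseInverse a c) :
    c = b * a * c := by
  have ha : star a = star a * star b * star a := by
    rw [← star_mul, ← star_mul, ← mul_assoc, hb.mul_mul_self]
  calc c = (c * a) * c := hc.mul_mul_self'.symm
    _ = star a * star c * c := by rw [← star_mul, hc.isSelfAdjoint_mul'.star_eq]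
    _ = star (b * a) * star (c * a) * c := by
      rw [ha, star_mul, star_mul c a]; simp only [mul_assoc]
    _ = b * a * c := by
      have hcac : c * (a * c) = c := by rw [← mul_assoc, hc.mul_mul_self']
      rw [hb.isSelfAdjoint_mul'.star_eq, hc.isSelfAdjoint_mul'.star_eq]
      simp only [mul_assoc, hcac]

theorem unique (hb : IsMoorePenroseInverse a b) (hc : IsMoorePenroseInverse a c) : b = c :=
  (hb.eq_mul_mul hc).trans (hb.eq_mul_mul' hc).symm

end IsMoorePenroseInverse

theorem isMoorePenroseInverse_units_mul {R : Type*} [Monoid R] [StarMul R] (u : Rˣ) {p : R}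
    (hp : IsSelfAdjoint p) (hpp : p * p = p) (hup : Commute (u : R) p) :
    IsMoorePenroseInverse (u * p) (↑u⁻¹ * p) := by
  have hright : (u : R) * p * (↑u⁻¹ * p) = p := by
    rw [mul_assoc, ← mul_assoc p, ← (hup.units_inv_left).eq, mul_assoc, hpp, ← mul_assoc,
      Units.mul_inv, one_mul]
  have hleft : (↑u⁻¹ * p) * (u * p) = p := by
    rw [mul_assoc, ← mul_assoc p, ← hup.eq, mul_assoc, hpp, ← mul_assoc, Units.inv_mul, one_mul]
  refine ⟨?_, ?_, by rwa [hright], by rwa [hleft]⟩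
  · rw [hright, ← mul_assoc, ← hup.eq, mul_assoc, hpp]
  · rw [hleft, ← mul_assoc, ← (hup.units_inv_left).eq, mul_assoc, hpp]

theorem isSelfAdjoint_iff_transpose_eq {n α : Type*} [InvolutiveStar α] [TrivialStar α]
    (X : Matrix n n α) :
    IsSelfAdjoint X ↔ Xᵀ = X := by
  rw [IsSelfAdjoint, star_eq_conjTranspose, conjTranspose_eq_transpose_of_trivial]

theorem diagonal_mul_self_of_binary {n α : Type*} [Fintype n] [DecidableEq n] [Semiring α]
    {z : n → α}
    (hz : ∀ i, z i = 0 ∨ z i = 1) : diagonal z * diagonal z = diagonal z := by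
  rw [diagonal_mul_diagonal]
  congr 1
  funext i
  rcases hz i with h | h <;> simp [h]

theorem pseudoinverse_relaxation_alt (n : ℕ) (lam : ℝ) (hlam : 0 < lam)
    (M : Matrix (Fin n) (Fin n) ℝ) (hM : M.PosSemidef)
    (z : Fin n → ℝ) (hz : ∀ i, z i = 0 ∨ z i = 1)
    (Z : Matrix (Fin n) (Fin n) ℝ) (hZ : Z = Matrix.diagonal z)
    (A B : Matrix (Fin n) (Fin n) ℝ)
    (hA : A = Z * (M + lam • (1 : Matrix (Fin n) (Fin n) ℝ)) * Z)
    (h1 : A * B * A = A) (h2 : B * A * B = B)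
    (h3 : (A * B)ᵀ = A * B) (h4 : (B * A)ᵀ = B * A) :
    B * Z = (lam • (1 : Matrix (Fin n) (Fin n) ℝ) + Z * M * Z)⁻¹ * Z := by
  set C := lam • (1 : Matrix (Fin n) (Fin n) ℝ) + Z * M * Z
  have hZZ : Z * Z = Z := hZ ▸ diagonal_mul_self_of_binary hz
  have hZsa : IsSelfAdjoint Z := by
    rw [isSelfAdjoint_iff_transpose_eq, hZ, diagonal_transpose]
  have hZMZ : (Z * M * Z).PosSemidef := by
    have hZh : Zᴴ = Z := hZsa
    simpa only [hZh] using hM.conjTranspose_mul_mul_same Z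
  have hCpd : C.PosDef := (PosDef.one.smul hlam).add_posSemidef hZMZ
  obtain ⟨u, hu⟩ := hCpd.isUnit
  have hCZ : C * Z = lam • Z + Z * M * Z := by
    simp only [C, add_mul, Matrix.smul_mul, one_mul, mul_assoc, hZZ]
  have hZC : Z * C = lam • Z + Z * M * Z := by
    simp only [C, mul_add, Matrix.mul_smul, mul_one, ← mul_assoc, hZZ]
  have hAC : A = C * Z := by
    rw [hA, hCZ, mul_add, add_mul, Matrix.mul_smul, Matrix.smul_mul, mul_one, hZZ, add_comm]
  have hB : IsMoorePenroseInverse A B :=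
    ⟨h1, h2, (isSelfAdjoint_iff_transpose_eq _).2 h3, (isSelfAdjoint_iff_transpose_eq _).2 h4⟩
  have hCinv : IsMoorePenroseInverse A (C⁻¹ * Z) := by
    rw [hAC, ← hu, ← coe_units_inv]
    exact isMoorePenroseInverse_units_mul u hZsa hZZ (hu ▸ hCZ.trans hZC.symm)
  rw [hB.unique hCinv, mul_assoc, hZZ]
end

section
/- Let n ∈ ℕ, λ > 0, let M ∈ ℝ^{n×n} be a symmetric positive semidefinite matrix, and let μ ∈ ℝⁿ. Then the function f : ℝⁿ → ℝ defined on the unit cube by f(z) = −(1/2) μᵀ(λI + diag(z)M)^{-1} diag(z) μ is a convex function on [0,1]ⁿ. -/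
/-!
For `z ≥ 0` the objective equals `max_β F(z, β)` with
`F(z, β) = -(1/(2λ)) (μ - Mβ)ᵀ diag(z) (μ - Mβ) - (1/2) βᵀ M β`,
a concave quadratic in `β` whose maximiser `β₀ = (λI + diag(z)M)⁻¹ diag(z) μ` is characterised by
the stationarity equation `diag(z)(μ - Mβ₀) = λβ₀`. Since `F` is affine in `z`, the objective is a
pointwise maximum of affine functions, hence convex.
-/

open Matrix

section PointwiseMax

variable {𝕜 E β ι : Type*} [Semiring 𝕜] [PartialOrder 𝕜] [AddCommMonoid E] [SMul 𝕜 E]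
  [AddCommMonoid β] [PartialOrder β] [IsOrderedAddMonoid β] [Module 𝕜 β] [PosSMulMono 𝕜 β]

theorem convexOn_of_forall_le_of_exists_eq {s : Set E} {f : E → β} (F : ι → E → β)
    (hs : Convex 𝕜 s) (hF : ∀ i, ConvexOn 𝕜 s (F i)) (hle : ∀ i, ∀ x ∈ s, F i x ≤ f x)
    (hattained : ∀ x ∈ s, ∃ i, F i x = f x) : ConvexOn 𝕜 s f := by
  refine ⟨hs, fun x hx y hy a b ha hb hab => ?_⟩
  obtain ⟨i, hi⟩ := hattained _ (hs hx hy ha hb hab)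
  calc f (a • x + b • y) = F i (a • x + b • y) := hi.symm
    _ ≤ a • F i x + b • F i y := (hF i).2 hx hy ha hb hab
    _ ≤ a • f x + b • f y := by gcongr <;> exact hle i _ ‹_›

end PointwiseMax

namespace Matrix

variable {n R : Type*} [Fintype n]

theorem dotProduct_mul_self_nonneg [Ring R] [LinearOrder R] [IsOrderedRing R] {z : n → R}
    (hz : 0 ≤ z) (v : n → R) : 0 ≤ z ⬝ᵥ (v * v) :=
  Finset.sum_nonneg fun i _ => mul_nonneg (hz i) (mul_self_nonneg (v i))

theorem dotProduct_mul_assoc [NonUnitalSemiring R] (z u v : n → R) :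
    z ⬝ᵥ (u * v) = (z * u) ⬝ᵥ v := by
  simp only [dotProduct, Pi.mul_apply, mul_assoc]

variable [DecidableEq n]

theorem diagonal_mulVec_eq_mul [NonUnitalNonAssocSemiring R] (z v : n → R) :
    diagonal z *ᵥ v = z * v :=
  funext (mulVec_diagonal z v)

theorem PosSemidef.isUnit_smul_one_add_diagonal_mul {M : Matrix n n ℝ} (hM : M.PosSemidef)
    {lam : ℝ} (hlam : 0 < lam) {z : n → ℝ} (hz : 0 ≤ z) :
    IsUnit (lam • (1 : Matrix n n ℝ) + diagonal z * M) := by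
  rw [isUnit_iff_isUnit_det, isUnit_iff_ne_zero, Ne, ← exists_mulVec_eq_zero_iff]
  rintro ⟨x, hx0, hx⟩
  rw [add_mulVec, smul_mulVec, one_mulVec, ← mulVec_mulVec, diagonal_mulVec_eq_mul] at hx
  -- pairing `λx + z * Mx = 0` with `Mx` gives a sum of two nonnegative terms
  have hpair : lam * (x ⬝ᵥ M *ᵥ x) + z ⬝ᵥ (M *ᵥ x * M *ᵥ x) = 0 := by
    have := congrArg ((M *ᵥ x) ⬝ᵥ ·) hx
    simp only [dotProduct_add, dotProduct_smul, dotProduct_zero, smul_eq_mul] at this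
    rwa [dotProduct_comm (M *ᵥ x) x, dotProduct_comm (M *ᵥ x), ← dotProduct_mul_assoc] at this
  have hquad : star x ⬝ᵥ M *ᵥ x = 0 := by
    have h₁ := hM.dotProduct_mulVec_nonneg x
    have h₂ := dotProduct_mul_self_nonneg hz (M *ᵥ x)
    rw [star_trivial] at h₁ ⊢
    nlinarith
  rw [(hM.dotProduct_mulVec_zero_iff x).1 hquad, mul_zero, add_zero] at hx
  exact hx0 ((smul_eq_zero.1 hx).resolve_left hlam.ne')

end Matrix

section DualObjective

variable {n : Type*} [Fintype n]

-- `F(z, β)` of the header, with `rᵀ diag(z) r` written as `z ⬝ᵥ (r * r)`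
noncomputable def dualObjective (lam : ℝ) (M : Matrix n n ℝ) (μ β z : n → ℝ) : ℝ :=
  -(1 / (2 * lam)) * (z ⬝ᵥ ((μ - M *ᵥ β) * (μ - M *ᵥ β))) - 1 / 2 * (β ⬝ᵥ M *ᵥ β)

theorem convexOn_dualObjective {s : Set (n → ℝ)} (hs : Convex ℝ s) (lam : ℝ)
    (M : Matrix n n ℝ) (μ β : n → ℝ) : ConvexOn ℝ s (dualObjective lam M μ β) := by
  refine ⟨hs, fun x _ y _ a b _ _ hab => le_of_eq ?_⟩
  simp only [dualObjective, add_dotProduct, smul_dotProduct, smul_eq_mul]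
  linear_combination (1 / 2 * (β ⬝ᵥ M *ᵥ β)) * hab

variable {lam : ℝ} {M : Matrix n n ℝ} {μ z β₀ : n → ℝ}

theorem dualObjective_of_stationary (hlam : lam ≠ 0) (hβ₀ : z * (μ - M *ᵥ β₀) = lam • β₀) :
    dualObjective lam M μ β₀ z = -(1 / 2) * (μ ⬝ᵥ β₀) := by
  rw [dualObjective, dotProduct_mul_assoc, hβ₀, smul_dotProduct, smul_eq_mul, dotProduct_sub,
    dotProduct_comm β₀ μ]
  field_simp
  ring

theorem dualObjective_sub_of_stationary (hlam : lam ≠ 0) (hM : Mᵀ = M)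
    (hβ₀ : z * (μ - M *ᵥ β₀) = lam • β₀) (δ : n → ℝ) :
    dualObjective lam M μ β₀ z - dualObjective lam M μ (β₀ + δ) z =
      1 / (2 * lam) * (z ⬝ᵥ (M *ᵥ δ * M *ᵥ δ)) + 1 / 2 * (δ ⬝ᵥ M *ᵥ δ) := by
  set r₀ := μ - M *ᵥ β₀
  have hr : μ - M *ᵥ (β₀ + δ) = r₀ - M *ᵥ δ := by simp only [r₀, mulVec_add, sub_add_eq_sub_sub]
  have hcross : z ⬝ᵥ (r₀ * M *ᵥ δ) = lam * (β₀ ⬝ᵥ M *ᵥ δ) := by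
    rw [dotProduct_mul_assoc, hβ₀, smul_dotProduct, smul_eq_mul]
  have hsymm : δ ⬝ᵥ M *ᵥ β₀ = β₀ ⬝ᵥ M *ᵥ δ := by
    rw [dotProduct_mulVec, ← mulVec_transpose, hM, dotProduct_comm]
  have hsq : (r₀ - M *ᵥ δ) * (r₀ - M *ᵥ δ) = r₀ * r₀ - 2 • (r₀ * M *ᵥ δ) + M *ᵥ δ * M *ᵥ δ := by
    rw [two_smul]; ring
  rw [dualObjective, dualObjective, hr, hsq, dotProduct_add, dotProduct_sub, dotProduct_smul,
    hcross, mulVec_add, add_dotProduct, dotProduct_add, dotProduct_add, hsymm]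
  field_simp
  ring

theorem dualObjective_le_of_stationary (hlam : 0 < lam) (hM : M.PosSemidef) (hz : 0 ≤ z)
    (hβ₀ : z * (μ - M *ᵥ β₀) = lam • β₀) (β : n → ℝ) :
    dualObjective lam M μ β z ≤ dualObjective lam M μ β₀ z := by
  have hsymm : Mᵀ = M := (conjTranspose_eq_transpose_of_trivial M).symm.trans hM.1
  have hgap := dualObjective_sub_of_stationary hlam.ne' hsymm hβ₀ (β - β₀)
  rw [add_sub_cancel] at hgap
  have h₁ := dotProduct_mul_self_nonneg hz (M *ᵥ (β - β₀))
  have h₂ : 0 ≤ (β - β₀) ⬝ᵥ M *ᵥ (β - β₀) := by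
    simpa only [star_trivial] using hM.dotProduct_mulVec_nonneg (β - β₀)
  have : 0 ≤ 1 / (2 * lam) := by positivity
  nlinarith

variable [DecidableEq n]

noncomputable def ridgeSolution (lam : ℝ) (M : Matrix n n ℝ) (μ z : n → ℝ) : n → ℝ :=
  (lam • 1 + diagonal z * M)⁻¹ *ᵥ (diagonal z *ᵥ μ)

theorem mul_sub_mulVec_ridgeSolution (hlam : 0 < lam) (hM : M.PosSemidef) (hz : 0 ≤ z)
    (μ : n → ℝ) : z * (μ - M *ᵥ ridgeSolution lam M μ z) = lam • ridgeSolution lam M μ z := by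
  set A := lam • (1 : Matrix n n ℝ) + diagonal z * M
  have hA : A *ᵥ ridgeSolution lam M μ z = z * μ := by
    rw [ridgeSolution, mulVec_mulVec, mul_nonsing_inv _ ((isUnit_iff_isUnit_det A).1
      (hM.isUnit_smul_one_add_diagonal_mul hlam hz)), one_mulVec, diagonal_mulVec_eq_mul]
  rw [add_mulVec, smul_mulVec, one_mulVec, ← mulVec_mulVec, diagonal_mulVec_eq_mul] at hA
  rw [mul_sub, sub_eq_iff_eq_add]
  exact hA.symm

end DualObjective

theorem objective_convex (n : ℕ) (lam : ℝ) (hlam : 0 < lam)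
    (M : Matrix (Fin n) (Fin n) ℝ) (hM : M.PosSemidef) (μ : Fin n → ℝ) :
    ConvexOn ℝ (Set.Icc (0 : Fin n → ℝ) 1)
      (fun z : Fin n → ℝ =>
        -(1 / 2) * (μ ⬝ᵥ ((lam • (1 : Matrix (Fin n) (Fin n) ℝ) +
          Matrix.diagonal z * M)⁻¹ *ᵥ (Matrix.diagonal z *ᵥ μ)))) := by
  have hstat (z : Fin n → ℝ) (hz : 0 ≤ z) := mul_sub_mulVec_ridgeSolution hlam hM hz μ
  refine (convexOn_of_forall_le_of_exists_eq (dualObjective lam M μ) (convex_Ici 0)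
      (fun β => convexOn_dualObjective (convex_Ici 0) lam M μ β)
      (fun β z hz => (dualObjective_le_of_stationary hlam hM hz (hstat z hz) β).trans_eq
        (dualObjective_of_stationary hlam.ne' (hstat z hz)))
      (fun z hz => ⟨_, dualObjective_of_stationary hlam.ne' (hstat z hz)⟩)).subset
    Set.Icc_subset_Ici_self (convex_Icc 0 1)
end

section
/- Let n ∈ ℕ, λ > 0, let M ∈ ℝ^{n×n} be a symmetric positive semidefinite matrix, and let z ∈ ℝⁿ have nonnegative entries with Z = diag(z). Then for every x ∈ ℝⁿ, xᵀ M (λI + ZM)^{-1} x ≥ 0. -/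
open Matrix

/-! With `A = λ • 1 + D * M`, one has `(A y) ⬝ᵥ (M y) = λ yᵀ M y + (M y)ᵀ D (M y)`, which is
nonnegative when `D` and `M` are positive semidefinite. The same identity shows that `A y = 0`
forces `yᵀ M y = 0`, hence `M y = 0` and `λ y = 0`, so `A` is invertible; writing `x = A y`
gives the claim. -/

namespace Matrix

variable {ι : Type*} [Fintype ι] {D M : Matrix ι ι ℝ}

lemma PosSemidef.dotProduct_mulVec_nonneg' (hM : M.PosSemidef) (v : ι → ℝ) :
    0 ≤ v ⬝ᵥ (M *ᵥ v) := by
  simpa using hM.dotProduct_mulVec_nonneg v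

variable [DecidableEq ι]

lemma smul_one_add_mul_mulVec_dotProduct (lam : ℝ) (D M : Matrix ι ι ℝ) (y : ι → ℝ) :
    ((lam • 1 + D * M) *ᵥ y) ⬝ᵥ (M *ᵥ y) =
      lam * (y ⬝ᵥ (M *ᵥ y)) + (M *ᵥ y) ⬝ᵥ (D *ᵥ (M *ᵥ y)) := by
  rw [add_mulVec, smul_mulVec, one_mulVec, ← mulVec_mulVec, add_dotProduct, smul_dotProduct,
    smul_eq_mul, dotProduct_comm (D *ᵥ _)]

lemma smul_one_add_mul_mulVec_dotProduct_nonneg {lam : ℝ} (hlam : 0 ≤ lam) (hD : D.PosSemidef)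
    (hM : M.PosSemidef) (y : ι → ℝ) : 0 ≤ ((lam • 1 + D * M) *ᵥ y) ⬝ᵥ (M *ᵥ y) := by
  rw [smul_one_add_mul_mulVec_dotProduct]
  exact add_nonneg (mul_nonneg hlam (hM.dotProduct_mulVec_nonneg' y))
    (hD.dotProduct_mulVec_nonneg' _)

lemma isUnit_smul_one_add_mul {lam : ℝ} (hlam : 0 < lam) (hD : D.PosSemidef)
    (hM : M.PosSemidef) : IsUnit (lam • 1 + D * M) := by
  refine mulVec_injective_iff_isUnit.mp ((injective_iff_map_eq_zero (mulVecLin _)).mpr ?_)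
  intro y hy
  have hsum := smul_one_add_mul_mulVec_dotProduct lam D M y
  rw [show (lam • 1 + D * M) *ᵥ y = 0 from hy, zero_dotProduct] at hsum
  have hquad : y ⬝ᵥ (M *ᵥ y) = 0 := by
    nlinarith [hM.dotProduct_mulVec_nonneg' y, hD.dotProduct_mulVec_nonneg' (M *ᵥ y)]
  have hMy : M *ᵥ y = 0 := (hM.dotProduct_mulVec_zero_iff y).mp (by simpa using hquad)
  have hlamy : lam • y = 0 := by
    rw [← hy, mulVecLin_apply, add_mulVec, ← mulVec_mulVec, hMy, mulVec_zero, add_zero,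
      smul_mulVec, one_mulVec]
  exact (smul_eq_zero.mp hlamy).resolve_left hlam.ne'

end Matrix

theorem quadratic_form_nonneg (n : ℕ) (lam : ℝ) (hlam : 0 < lam)
    (M : Matrix (Fin n) (Fin n) ℝ) (hM : M.PosSemidef)
    (z : Fin n → ℝ) (hz : ∀ i, 0 ≤ z i) (x : Fin n → ℝ) :
    0 ≤ x ⬝ᵥ (M *ᵥ ((lam • (1 : Matrix (Fin n) (Fin n) ℝ) +
      Matrix.diagonal z * M)⁻¹ *ᵥ x)) := by
  have hZ : (diagonal z).PosSemidef := posSemidef_diagonal_iff.mpr hz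
  set A := lam • (1 : Matrix (Fin n) (Fin n) ℝ) + diagonal z * M
  have hA : IsUnit A.det := (isUnit_iff_isUnit_det A).mp (isUnit_smul_one_add_mul hlam hZ hM)
  have hx : A *ᵥ (A⁻¹ *ᵥ x) = x := by rw [mulVec_mulVec, mul_nonsing_inv A hA, one_mulVec]
  have key : 0 ≤ (A *ᵥ (A⁻¹ *ᵥ x)) ⬝ᵥ (M *ᵥ (A⁻¹ *ᵥ x)) :=
    smul_one_add_mul_mulVec_dotProduct_nonneg hlam.le hZ hM _
  rwa [hx] at key
end

section
/- Let n ∈ ℕ, λ > 0, let M ∈ ℝ^{n×n} be a symmetric positive semidefinite matrix, let μ ∈ ℝⁿ, let z ∈ {0,1}ⁿ be a binary vector, and let Z = diag(z). Define β* = (λI + ZM)^{-1}Zμ. Then β* minimizes the function g(β) = (1/2)βᵀ(Z(M + λI)Z)β − (Zμ)ᵀβ over β ∈ ℝⁿ, i.e., g(β) ≥ g(β*) for all β ∈ ℝⁿ, and the minimum value satisfies g(β*) = −(1/2) μᵀβ*. -/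
/-!
At a fixed support the first-order condition `(λI + ZM) β = Zμ` forces `λβ = Z(μ - Mβ)`, so `β*`
lies in the range of the projection `Z`. On that range `Z(M + λI)Z` acts as `λI + ZM`, hence `β*`
is a stationary point of the convex quadratic `g`, i.e. its minimiser. The same computation with
`μ = 0`, together with `xᵀ(λI + ZM)x = λ‖x‖² + xᵀMx` for `x = Zx`, shows `λI + ZM` is invertible.
-/

open Matrix

variable {ι : Type*} [Fintype ι]

theorem Matrix.isIdempotentElem_diagonal_iff [DecidableEq ι] {R : Type*} [Semiring R] {d : ι → R} :
    IsIdempotentElem (diagonal d) ↔ ∀ i, IsIdempotentElem (d i) := by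
  simp only [IsIdempotentElem, diagonal_mul_diagonal, diagonal_eq_diagonal_iff]

theorem IsIdempotentElem.mulVec_mulVec_self {R : Type*} [CommSemiring R] {Z : Matrix ι ι R}
    (hZ : IsIdempotentElem Z) (v : ι → R) : Z *ᵥ (Z *ᵥ v) = Z *ᵥ v := by
  rw [mulVec_mulVec, hZ.eq]

theorem Matrix.IsSymm.dotProduct_mulVec_comm {R : Type*} [CommSemiring R] {Z : Matrix ι ι R}
    (hZ : Z.IsSymm) (v w : ι → R) : v ⬝ᵥ Z *ᵥ w = Z *ᵥ v ⬝ᵥ w := by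
  rw [dotProduct_mulVec, ← mulVec_transpose, hZ.eq]

theorem Matrix.mul_add_smul_one_mul_mulVec_of_mulVec_eq_self [DecidableEq ι] {R : Type*}
    [CommRing R] {Z M : Matrix ι ι R} {lam : R} {x : ι → R} (hx : Z *ᵥ x = x) :
    (Z * (M + lam • 1) * Z) *ᵥ x = (lam • 1 + Z * M) *ᵥ x := by
  rw [← mulVec_mulVec, hx, ← mulVec_mulVec]
  simp only [add_mulVec, mulVec_add, smul_mulVec, one_mulVec, mulVec_smul, hx, mulVec_mulVec,
    add_comm]

theorem IsIdempotentElem.mulVec_eq_self_of_mulVec_eq [DecidableEq ι] {R : Type*} [Field R]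
    {Z M : Matrix ι ι R} (hZ : IsIdempotentElem Z) {lam : R} (hlam : lam ≠ 0) {x w : ι → R}
    (h : (lam • 1 + Z * M) *ᵥ x = Z *ᵥ w) : Z *ᵥ x = x := by
  have hrange : lam • x = Z *ᵥ (w - M *ᵥ x) := by
    rw [add_mulVec, smul_mulVec, one_mulVec, ← mulVec_mulVec] at h
    rw [mulVec_sub, ← h, add_sub_cancel_right]
  have hfix : lam • (Z *ᵥ x) = lam • x := by
    rw [← mulVec_smul, hrange, hZ.mulVec_mulVec_self]
  exact smul_right_injective _ hlam hfix

section Real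

variable [DecidableEq ι] {Z M : Matrix ι ι ℝ} {lam : ℝ}

theorem Matrix.isUnit_smul_one_add_mul_s9 (hZ : IsIdempotentElem Z) (hZs : Z.IsSymm)
    (hM : M.PosSemidef) (hlam : 0 < lam) : IsUnit (lam • 1 + Z * M) := by
  rw [← mulVec_injective_iff_isUnit]
  suffices h : ∀ x, (lam • 1 + Z * M) *ᵥ x = 0 → x = 0 from
    fun x y hxy => sub_eq_zero.mp (h _ (by rw [mulVec_sub, hxy, sub_self]))
  intro x hx
  have hZx : Z *ᵥ x = x :=
    hZ.mulVec_eq_self_of_mulVec_eq hlam.ne' (w := 0) (by rw [mulVec_zero]; exact hx)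
  have hquad : lam * (x ⬝ᵥ x) + x ⬝ᵥ M *ᵥ x = 0 := by
    simpa only [add_mulVec, smul_mulVec, one_mulVec, ← mulVec_mulVec, dotProduct_add,
      dotProduct_smul, smul_eq_mul, hZs.dotProduct_mulVec_comm x, hZx, dotProduct_zero]
      using congrArg (x ⬝ᵥ ·) hx
  have hMx : 0 ≤ x ⬝ᵥ M *ᵥ x := by simpa using hM.dotProduct_mulVec_nonneg x
  have hxx : 0 ≤ x ⬝ᵥ x := dotProduct_self_star_nonneg x
  exact dotProduct_self_eq_zero.mp (by nlinarith)

theorem Matrix.posSemidef_mul_add_smul_one_mul (hZs : Z.IsSymm) (hM : M.PosSemidef)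
    (hlam : 0 ≤ lam) :
    (Z * (M + lam • 1) * Z).PosSemidef := by
  have h := (hM.add (PosSemidef.one.smul hlam)).conjTranspose_mul_mul_same Z
  rwa [conjTranspose_eq_transpose_of_trivial, hZs.eq] at h

end Real

section QuadObjective

variable {Q : Matrix ι ι ℝ} {c x : ι → ℝ}

noncomputable def quadObjective (Q : Matrix ι ι ℝ) (c β : ι → ℝ) : ℝ :=
  1 / 2 * (β ⬝ᵥ Q *ᵥ β) - c ⬝ᵥ β

theorem quadObjective_sub_of_mulVec_eq (hQ : Q.IsSymm) (hx : Q *ᵥ x = c) (y : ι → ℝ) :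
    quadObjective Q c y - quadObjective Q c x = 1 / 2 * ((y - x) ⬝ᵥ Q *ᵥ (y - x)) := by
  subst hx
  have hxy : y ⬝ᵥ Q *ᵥ x = x ⬝ᵥ Q *ᵥ y := by
    rw [hQ.dotProduct_mulVec_comm, dotProduct_comm]
  have hcy : Q *ᵥ x ⬝ᵥ y = x ⬝ᵥ Q *ᵥ y := (hQ.dotProduct_mulVec_comm x y).symm
  simp only [quadObjective, mulVec_sub, dotProduct_sub, sub_dotProduct,
    dotProduct_comm (Q *ᵥ x) x, hxy, hcy]
  ring

theorem quadObjective_of_mulVec_eq (hx : Q *ᵥ x = c) :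
    quadObjective Q c x = -(1 / 2) * (c ⬝ᵥ x) := by
  subst hx
  rw [quadObjective, dotProduct_comm (Q *ᵥ x)]
  ring

theorem Matrix.PosSemidef.quadObjective_le (hQ : Q.PosSemidef) (hx : Q *ᵥ x = c) (y : ι → ℝ) :
    quadObjective Q c x ≤ quadObjective Q c y := by
  have hsymm : Q.IsSymm := isHermitian_iff_isSymm.mp hQ.isHermitian
  have hnonneg : 0 ≤ (y - x) ⬝ᵥ Q *ᵥ (y - x) := by
    simpa using hQ.dotProduct_mulVec_nonneg (y - x)
  linarith [quadObjective_sub_of_mulVec_eq hsymm hx y]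

end QuadObjective

theorem beta_star_minimizes (n : ℕ) (lam : ℝ) (hlam : 0 < lam)
    (M : Matrix (Fin n) (Fin n) ℝ) (hM : M.PosSemidef) (μ : Fin n → ℝ)
    (z : Fin n → ℝ) (hz : ∀ i, z i = 0 ∨ z i = 1)
    (Z : Matrix (Fin n) (Fin n) ℝ) (hZ : Z = Matrix.diagonal z)
    (βstar : Fin n → ℝ)
    (hβ : βstar = (lam • (1 : Matrix (Fin n) (Fin n) ℝ) + Z * M)⁻¹ *ᵥ (Z *ᵥ μ))
    (g : (Fin n → ℝ) → ℝ)
    (hg : g = fun β : Fin n → ℝ =>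
      (1 / 2) * (β ⬝ᵥ ((Z * (M + lam • (1 : Matrix (Fin n) (Fin n) ℝ)) * Z) *ᵥ β))
        - (Z *ᵥ μ) ⬝ᵥ β) :
    (∀ β : Fin n → ℝ, g βstar ≤ g β) ∧ g βstar = -(1 / 2) * (μ ⬝ᵥ βstar) := by
  have hZidem : IsIdempotentElem Z := hZ ▸ isIdempotentElem_diagonal_iff.mpr fun i =>
    (hz i).elim (fun h => h ▸ .zero) (fun h => h ▸ .one)
  have hZsymm : Z.IsSymm := hZ ▸ isSymm_diagonal z
  have hA := isUnit_smul_one_add_mul_s9 hZidem hZsymm hM hlam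
  have hAβ : (lam • 1 + Z * M) *ᵥ βstar = Z *ᵥ μ := by
    rw [hβ, mulVec_mulVec, mul_nonsing_inv _ ((isUnit_iff_isUnit_det _).mp hA), one_mulVec]
  have hZβ : Z *ᵥ βstar = βstar := hZidem.mulVec_eq_self_of_mulVec_eq hlam.ne' hAβ
  have hQβ : (Z * (M + lam • 1) * Z) *ᵥ βstar = Z *ᵥ μ :=
    (mul_add_smul_one_mul_mulVec_of_mulVec_eq_self hZβ).trans hAβ
  have hQ := posSemidef_mul_add_smul_one_mul hZsymm hM hlam.le
  have hg' : g = quadObjective (Z * (M + lam • 1) * Z) (Z *ᵥ μ) := hg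
  refine ⟨fun β => hg' ▸ hQ.quadObjective_le hQβ β, ?_⟩
  rw [hg', quadObjective_of_mulVec_eq hQβ, ← hZsymm.dotProduct_mulVec_comm, hZβ]
end

section
/- Let n ∈ ℕ, λ > 0, let M ∈ ℝ^{n×n} be a symmetric positive semidefinite matrix, and let μ ∈ ℝⁿ. Define c(z) = −(1/2) μᵀ K(z)^{-1} diag(z) μ where K(z) = λI + diag(z)M, for z in the open set U = {z ∈ ℝⁿ : K(z) is invertible}. Then for every z ∈ U with zᵢ ≥ 0 for all i, and every index i ∈ {1,…,n}, the partial derivative of c with respect to zᵢ exists and equals (1/2) μᵀ K(z)^{-1} ( Eᵢ M K(z)^{-1} diag(z) − Eᵢ ) μ, where Eᵢ ∈ ℝ^{n×n} is the matrix with a 1 in entry (i,i) and zeros elsewhere. -/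
/-!
Along the `i`-th coordinate both `diag(z)` and `K(z) = λI + diag(z)M` are affine, with derivatives
`Eᵢ` and `Eᵢ M`. Differentiating the inverse by `d(K⁻¹) = -K⁻¹ (dK) K⁻¹` and applying the product
rule to `K⁻¹ diag(z)` gives `-K⁻¹ Eᵢ M K⁻¹ diag(z) + K⁻¹ Eᵢ`, and the quadratic form `μᵀ · μ` is linear.
-/

open Matrix

-- Derivatives of matrix-valued maps do not depend on the norm; this one makes matrices a normed ring.
attribute [local instance] Matrix.linftyOpNormedRing Matrix.linftyOpNormedAlgebra

theorem HasDerivAt.ringInverse {𝕜 R : Type*} [NontriviallyNormedField 𝕜] [NormedRing R]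
    [HasSummableGeomSeries R] [NormedAlgebra 𝕜 R] {A : 𝕜 → R} {A' : R} {t : 𝕜}
    (hA : HasDerivAt A A' t) (ht : IsUnit (A t)) :
    HasDerivAt (fun s => Ring.inverse (A s))
      (-(Ring.inverse (A t) * A' * Ring.inverse (A t))) t := by
  obtain ⟨u, hu⟩ := ht
  have hinv := hasFDerivAt_ringInverse (𝕜 := 𝕜) u
  rw [hu] at hinv
  rw [← hu, Ring.inverse_unit]
  exact hinv.comp_hasDerivAt t hA

theorem Matrix.diagonal_update {n α : Type*} [DecidableEq n] [AddCommGroup α] (z : n → α) (i : n)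
    (s : α) : diagonal (Function.update z i s) = diagonal z + single i i (s - z i) := by
  have hz : Function.update z i s = z + Pi.single i (s - z i) := by
    rw [Pi.update_eq_sub_add_single, Pi.single_sub, sub_add_eq_add_sub, add_sub_assoc]
  rw [hz, ← diagonal_single]
  exact (diagonal_add z _).symm

section

variable {𝕜 : Type*} [NontriviallyNormedField 𝕜] {n : Type*} [Fintype n] [DecidableEq n]

theorem hasDerivAt_diagonal_update (z : n → 𝕜) (i : n) (t : 𝕜) :
    HasDerivAt (fun s => diagonal (Function.update z i s)) (single i i 1) t := by
  have hsingle (s : 𝕜) : single i i (s - z i) = (s - z i) • single i i 1 := by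
    rw [smul_single, smul_eq_mul, mul_one]
  simp_rw [diagonal_update, hsingle]
  exact ((((hasDerivAt_id' t).sub_const (z i)).smul_const (single i i (1 : 𝕜))).const_add
    (diagonal z)).congr_deriv (one_smul 𝕜 _)

theorem HasDerivAt.dotProduct_mulVec [CompleteSpace 𝕜] {P : 𝕜 → Matrix n n 𝕜}
    {P' : Matrix n n 𝕜} {t : 𝕜} (hP : HasDerivAt P P' t) (u v : n → 𝕜) :
    HasDerivAt (fun s => u ⬝ᵥ (P s *ᵥ v)) (u ⬝ᵥ (P' *ᵥ v)) t := by
  let φ : Matrix n n 𝕜 →ₗ[𝕜] 𝕜 :=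
    { toFun := fun B => u ⬝ᵥ (B *ᵥ v)
      map_add' := fun B C => by simp [add_mulVec]
      map_smul' := fun c B => by simp [smul_mulVec] }
  exact φ.toContinuousLinearMap.hasFDerivAt.comp_hasDerivAt t hP

end

theorem gradient_formula_general (n : ℕ) (lam : ℝ)
    (M : Matrix (Fin n) (Fin n) ℝ) (μ : Fin n → ℝ)
    (z : Fin n → ℝ)
    (hzU : IsUnit (lam • (1 : Matrix (Fin n) (Fin n) ℝ) + Matrix.diagonal z * M))
    (i : Fin n) :
    HasDerivAt
      (fun s : ℝ =>
        -(1 / 2) * (μ ⬝ᵥ ((lam • (1 : Matrix (Fin n) (Fin n) ℝ) +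
          Matrix.diagonal (Function.update z i s) * M)⁻¹ *ᵥ
            (Matrix.diagonal (Function.update z i s) *ᵥ μ))))
      ((1 / 2) * (μ ⬝ᵥ ((lam • (1 : Matrix (Fin n) (Fin n) ℝ) +
          Matrix.diagonal z * M)⁻¹ *ᵥ
        ((Matrix.single i i 1 * M *
            (lam • (1 : Matrix (Fin n) (Fin n) ℝ) + Matrix.diagonal z * M)⁻¹ *
              Matrix.diagonal z
          - Matrix.single i i 1) *ᵥ μ))))
      (z i) := by
  set K := lam • (1 : Matrix (Fin n) (Fin n) ℝ) + diagonal z * M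
  set E : Matrix (Fin n) (Fin n) ℝ := single i i 1
  have hD := hasDerivAt_diagonal_update z i (z i)
  have hK := (hD.mul_const M).const_add (lam • (1 : Matrix (Fin n) (Fin n) ℝ))
  have hKinv := hK.ringInverse (by simpa using hzU)
  have hc := ((hKinv.mul hD).dotProduct_mulVec μ μ).const_mul (-(1 / 2))
  have hderiv : -(K⁻¹ * (E * M) * K⁻¹) * diagonal z + K⁻¹ * E
      = -(K⁻¹ * (E * M * K⁻¹ * diagonal z - E)) := by noncomm_ring
  simp only [Function.update_eq_self, Pi.mul_apply, ← nonsing_inv_eq_ringInverse] at hc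
  rw [hderiv, neg_mulVec, dotProduct_neg] at hc
  simp only [mulVec_mulVec]
  exact hc.congr_deriv (by ring)

theorem gradient_formula (n : ℕ) (lam : ℝ) (hlam : 0 < lam)
    (M : Matrix (Fin n) (Fin n) ℝ) (hM : M.PosSemidef) (μ : Fin n → ℝ)
    (z : Fin n → ℝ)
    (hzU : IsUnit (lam • (1 : Matrix (Fin n) (Fin n) ℝ) + Matrix.diagonal z * M))
    (hznn : ∀ i, 0 ≤ z i) (i : Fin n) :
    HasDerivAt
      (fun s : ℝ =>
        -(1 / 2) * (μ ⬝ᵥ ((lam • (1 : Matrix (Fin n) (Fin n) ℝ) +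
          Matrix.diagonal (Function.update z i s) * M)⁻¹ *ᵥ
            (Matrix.diagonal (Function.update z i s) *ᵥ μ))))
      ((1 / 2) * (μ ⬝ᵥ ((lam • (1 : Matrix (Fin n) (Fin n) ℝ) +
          Matrix.diagonal z * M)⁻¹ *ᵥ
        ((Matrix.single i i 1 * M *
            (lam • (1 : Matrix (Fin n) (Fin n) ℝ) + Matrix.diagonal z * M)⁻¹ *
              Matrix.diagonal z
          - Matrix.single i i 1) *ᵥ μ))))
      (z i) :=
  gradient_formula_general n lam M μ z hzU i
end

section
/- Let μ ∈ ℝ, m ≥ 0, λ > 0, and 0 < a ≤ 1. Then the function z ↦ −μ² zᵃ / (λ + m zᵃ) is convex on the interval [0, ∞). -/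
/-!
On `[0, ∞)` the map `t ↦ t / (λ + m t)` is concave and increasing, so `g t = -μ² t / (λ + m t)`
is convex and decreasing there. Since `z ↦ zᵃ` is concave for `0 < a ≤ 1` and maps `[0, ∞)` onto
itself, the composition `z ↦ g (zᵃ)` is convex.
-/

open Set

section LinearFractional

variable {m lam : ℝ}

theorem concaveOn_div_add_mul (hm : 0 ≤ m) (hlam : 0 < lam) :
    ConcaveOn ℝ (Ici 0) (fun t : ℝ => t / (lam + m * t)) := by
  refine ⟨convex_Ici 0, fun x hx y hy p q hp hq hpq => ?_⟩
  rw [mem_Ici] at hx hy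
  have hdx : 0 < lam + m * x := by positivity
  have hdy : 0 < lam + m * y := by positivity
  have hdz : 0 < lam + m * (p * x + q * y) := by positivity
  obtain rfl : q = 1 - p := by linarith
  simp only [smul_eq_mul]
  rw [mul_div_assoc', mul_div_assoc', div_add_div _ _ hdx.ne' hdy.ne',
    div_le_div_iff₀ (by positivity) hdz]
  -- the defect of concavity is `p (1 - p) m λ (x - y)²` over the product of the denominators
  nlinarith [mul_nonneg (mul_nonneg (mul_nonneg (mul_nonneg hp hq) hm) hlam.le) (sq_nonneg (x - y))]

theorem monotoneOn_div_add_mul (hm : 0 ≤ m) (hlam : 0 < lam) :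
    MonotoneOn (fun t : ℝ => t / (lam + m * t)) (Ici 0) := by
  intro x hx y hy hxy
  rw [mem_Ici] at hx hy
  have hdx : 0 < lam + m * x := by positivity
  have hdy : 0 < lam + m * y := by positivity
  rw [div_le_div_iff₀ hdx hdy]
  nlinarith [mul_nonneg hlam.le (sub_nonneg.2 hxy)]

end LinearFractional

theorem Real.rpow_image_Ici_zero {a : ℝ} (ha : a ≠ 0) : (fun z : ℝ => z ^ a) '' Ici 0 = Ici 0 := by
  refine Subset.antisymm ?_ fun t ht => ⟨t ^ a⁻¹, Real.rpow_nonneg ht _, Real.rpow_inv_rpow ht ha⟩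
  rintro _ ⟨z, hz, rfl⟩
  exact Real.rpow_nonneg hz a

theorem rpow_relaxation_convex (μ m lam a : ℝ) (hm : 0 ≤ m) (hlam : 0 < lam)
    (ha0 : 0 < a) (ha1 : a ≤ 1) :
    ConvexOn ℝ (Set.Ici (0 : ℝ))
      (fun z : ℝ => -(μ ^ 2 * z ^ a) / (lam + m * z ^ a)) := by
  have hconvex : ConvexOn ℝ (Ici 0) (fun t : ℝ => -(μ ^ 2 * t) / (lam + m * t)) := by
    simpa only [Pi.neg_def, neg_div, mul_div_assoc, smul_eq_mul]
      using ((concaveOn_div_add_mul hm hlam).smul (sq_nonneg μ)).neg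
  have hanti : AntitoneOn (fun t : ℝ => -(μ ^ 2 * t) / (lam + m * t)) (Ici 0) :=
    fun x hx y hy hxy => by
      simp only [neg_div, mul_div_assoc, neg_le_neg_iff]
      exact mul_le_mul_of_nonneg_left (monotoneOn_div_add_mul hm hlam hx hy hxy) (sq_nonneg μ)
  rw [← Real.rpow_image_Ici_zero ha0.ne'] at hconvex hanti
  exact hconvex.comp_concaveOn (Real.concaveOn_rpow ha0.le ha1) hanti
end

section
/- Let n ∈ ℕ, λ > 0, let M ∈ ℝ^{n×n} be a symmetric positive semidefinite matrix, let μ ∈ ℝⁿ, let z ∈ {0,1}ⁿ be a binary vector with support s = {i : zᵢ = 1}, and let Z = diag(z). Then μᵀ(λI + ZM)^{-1}Zμ = μ_sᵀ (λ I_s + M_{s,s})^{-1} μ_s, where μ_s ∈ ℝˢ is the restriction of μ to the coordinates in s, M_{s,s} is the principal submatrix of M on rows and columns in s, and I_s is the identity on ℝˢ. -/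
/-!
Let `P` be the `0/1` matrix embedding `ℝ^s` into `ℝ^n`. Then `Z = P Pᵀ` and `M_{s,s} = Pᵀ M P`, so
with `N = Pᵀ M` the claim is the push-through identity `(λ I + P N)⁻¹ P = P (λ I + N P)⁻¹`, which
follows from `(λ I + P N) P = P (λ I + N P)`. By the Weinstein–Aronszajn identity the two
determinants vanish simultaneously when `λ ≠ 0`, so the identity holds even when the inverses do
not exist.
-/

namespace Matrix

section PushThrough

variable {K m n : Type*} [Field K] [Fintype m] [DecidableEq m] [Fintype n]

theorem det_smul_one_add_mul {c : K} (hc : c ≠ 0) (A : Matrix m n K) (B : Matrix n m K) :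
    (c • 1 + A * B).det = c ^ Fintype.card m * (1 + (c⁻¹ • A) * B).det := by
  rw [← det_smul, smul_add, smul_mul, smul_smul, mul_inv_cancel₀ hc, one_smul]

variable [DecidableEq n]

theorem isUnit_det_smul_one_add_mul_comm {c : K} (hc : c ≠ 0) (A : Matrix m n K)
    (B : Matrix n m K) : IsUnit (c • 1 + A * B).det ↔ IsUnit (c • 1 + B * A).det := by
  rw [det_smul_one_add_mul hc, det_smul_one_add_mul hc, det_one_add_mul_comm, Matrix.mul_smul]
  simp [hc]

theorem smul_one_add_mul_inv_mul_comm {c : K} (hc : c ≠ 0) (A : Matrix m n K)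
    (B : Matrix n m K) : (c • 1 + A * B)⁻¹ * A = A * (c • 1 + B * A)⁻¹ := by
  by_cases h : IsUnit (c • 1 + B * A).det
  · have h' := (isUnit_det_smul_one_add_mul_comm hc A B).mpr h
    have hcomm : (c • 1 + A * B) * A = A * (c • 1 + B * A) := by
      simp only [Matrix.add_mul, Matrix.mul_add, Matrix.smul_mul, Matrix.mul_smul,
        Matrix.one_mul, Matrix.mul_one, Matrix.mul_assoc]
    calc (c • 1 + A * B)⁻¹ * A
        = (c • 1 + A * B)⁻¹ * (A * (c • 1 + B * A)) * (c • 1 + B * A)⁻¹ := by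
          rw [Matrix.mul_assoc, Matrix.mul_assoc, mul_nonsing_inv _ h, Matrix.mul_one]
      _ = A * (c • 1 + B * A)⁻¹ := by
          rw [← hcomm, ← Matrix.mul_assoc, nonsing_inv_mul _ h', Matrix.one_mul]
  · have h' := mt (isUnit_det_smul_one_add_mul_comm hc A B).mp h
    rw [nonsing_inv_apply_not_isUnit _ h, nonsing_inv_apply_not_isUnit _ h', Matrix.mul_zero,
      Matrix.zero_mul]

end PushThrough

section Inclusion

variable {ι R : Type*} [Fintype ι] [DecidableEq ι] [NonAssocSemiring R] (p : ι → Prop)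

variable (R) in
def inclusionMatrix : Matrix ι {i // p i} R := (1 : Matrix ι ι R).submatrix id Subtype.val

theorem inclusionMatrix_mul_transpose [DecidablePred p] :
    inclusionMatrix R p * (inclusionMatrix R p)ᵀ =
      diagonal fun i => if p i then 1 else 0 := by
  ext i j
  rw [mul_apply]
  simp only [inclusionMatrix, transpose_apply, submatrix_apply, id, one_apply,
    diagonal_apply, mul_ite, mul_one, mul_zero]
  rw [← Finset.sum_subtype (Finset.univ.filter p) (by simp)
    (fun k => if j = k then if i = k then (1 : R) else 0 else 0), Finset.sum_ite_eq]
  by_cases hij : i = j <;> simp [hij]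

theorem transpose_inclusionMatrix_mul {m : Type*} (N : Matrix ι m R) :
    (inclusionMatrix R p)ᵀ * N = N.submatrix Subtype.val id := by
  rw [inclusionMatrix, transpose_submatrix, transpose_one]
  exact one_submatrix_mul _ (Equiv.refl ι) N

theorem mul_inclusionMatrix {m : Type*} [Fintype m] (N : Matrix m ι R) :
    N * inclusionMatrix R p = N.submatrix id Subtype.val :=
  mul_submatrix_one (Equiv.refl ι) _ N

theorem transpose_inclusionMatrix_mulVec (v : ι → R) :
    (inclusionMatrix R p)ᵀ *ᵥ v = fun i : {i // p i} => v i := by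
  ext i
  simp [inclusionMatrix, mulVec, dotProduct, one_apply]

theorem dotProduct_inv_smul_one_add_diagonal_mul_mulVec {K : Type*} [Field K] [DecidablePred p]
    {c : K} (hc : c ≠ 0) (M : Matrix ι ι K) (v : ι → K) :
    v ⬝ᵥ ((c • 1 + diagonal (fun i => if p i then 1 else 0) * M)⁻¹ *ᵥ
        (diagonal (fun i => if p i then 1 else 0) *ᵥ v)) =
      (fun i : {i // p i} => v i) ⬝ᵥ
        ((c • 1 + M.submatrix Subtype.val Subtype.val)⁻¹ *ᵥ fun i : {i // p i} => v i) := by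
  have hM : M.submatrix Subtype.val Subtype.val =
      (inclusionMatrix K p)ᵀ * M * inclusionMatrix K p := by
    rw [transpose_inclusionMatrix_mul, mul_inclusionMatrix, submatrix_submatrix]
    rfl
  rw [← inclusionMatrix_mul_transpose, hM, ← transpose_inclusionMatrix_mulVec, Matrix.mul_assoc,
    ← mulVec_mulVec, mulVec_mulVec _ _ (inclusionMatrix K p), smul_one_add_mul_inv_mul_comm hc,
    ← mulVec_mulVec, dotProduct_mulVec, ← mulVec_transpose, Matrix.mul_assoc]

end Inclusion

end Matrix

open Matrix

theorem cost_restriction_general (n : ℕ) (lam : ℝ) (hlam : 0 < lam)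
    (M : Matrix (Fin n) (Fin n) ℝ)
    (μ : Fin n → ℝ) (z : Fin n → ℝ) (hz : ∀ i, z i = 0 ∨ z i = 1) :
    μ ⬝ᵥ ((lam • (1 : Matrix (Fin n) (Fin n) ℝ) + Matrix.diagonal z * M)⁻¹ *ᵥ
        (Matrix.diagonal z *ᵥ μ))
      = (fun i : {i : Fin n // z i = 1} => μ i.val) ⬝ᵥ
        (((lam • (1 : Matrix {i : Fin n // z i = 1} {i : Fin n // z i = 1} ℝ) +
            M.submatrix Subtype.val Subtype.val)⁻¹)
          *ᵥ (fun i : {i : Fin n // z i = 1} => μ i.val)) := by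
  have hZ : diagonal z = diagonal fun i => if z i = 1 then 1 else 0 := by
    congr with i
    rcases hz i with h | h <;> simp [h]
  rw [hZ]
  exact dotProduct_inv_smul_one_add_diagonal_mul_mulVec _ hlam.ne' M μ

theorem cost_restriction (n : ℕ) (lam : ℝ) (hlam : 0 < lam)
    (M : Matrix (Fin n) (Fin n) ℝ) (hM : M.PosSemidef)
    (μ : Fin n → ℝ) (z : Fin n → ℝ) (hz : ∀ i, z i = 0 ∨ z i = 1) :
    μ ⬝ᵥ ((lam • (1 : Matrix (Fin n) (Fin n) ℝ) + Matrix.diagonal z * M)⁻¹ *ᵥ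
        (Matrix.diagonal z *ᵥ μ))
      = (fun i : {i : Fin n // z i = 1} => μ i.val) ⬝ᵥ
        (((lam • (1 : Matrix {i : Fin n // z i = 1} {i : Fin n // z i = 1} ℝ) +
            M.submatrix Subtype.val Subtype.val)⁻¹)
          *ᵥ (fun i : {i : Fin n // z i = 1} => μ i.val)) :=
  cost_restriction_general n lam hlam M μ z hz
end

section
/- Let n ∈ ℕ, let F ⊆ ℝⁿ be a nonempty finite set, and let c : ℝⁿ → ℝ be a function together with a map g : ℝⁿ → ℝⁿ such that c(z) ≥ c(w) + g(w)ᵀ(z − w) for all z, w ∈ F (g(w) is a subgradient of c at w relative to F). Suppose sequences z : ℕ → F and η : ℕ → ℝ satisfy, for every i ≥ 1: (z(i), η(i)) minimizes η' over all pairs (z', η') with z' ∈ F and η' ≥ c(z(τ)) + g(z(τ))ᵀ(z' − z(τ)) for all τ < i. Then there exists an index i ≤ |F| such that c(z(i)) ≤ η(i), and for any such i, z(i) is a minimizer of c over F. -/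
/-!
The cut generated at a point `w` is tight there: it takes the value `c w` at `w`. So if the
iterate `z i` repeats an earlier iterate `z τ`, the feasibility of `(z i, η i)` for that cut gives
`c (z i) ≤ η i`, and the method stops. Among the first `|F| + 1` iterates in the finite set `F`
some point must repeat, which bounds the stopping index by `|F|`. When the method stops, `c (z i)`
is at most the optimal value `η i` of a relaxation whose cuts underestimate `c` on `F`, so `z i`
minimizes `c` over `F`.
-/

open Matrix

theorem Finset.exists_lt_le_card_eq_of_forall_mem {α : Type*} {F : Finset α} {z : ℕ → α}
    (hz : ∀ i, z i ∈ F) : ∃ τ i, τ < i ∧ i ≤ F.card ∧ z τ = z i := by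
  obtain ⟨a, ha, b, hb, hab, heq⟩ := Finset.exists_ne_map_eq_of_card_lt_of_maps_to
    (s := Finset.range (F.card + 1)) (by simp) (fun i _ => hz i)
  rw [Finset.mem_range] at ha hb
  rcases hab.lt_or_gt with hlt | hlt
  · exact ⟨a, b, hlt, by omega, heq⟩
  · exact ⟨b, a, hlt, by omega, heq.symm⟩

/-- `ℓ w x` is the value at `x` of the cut generated at `w`. -/
theorem exists_le_card_le_of_cut_tight {α : Type*} {F : Finset α} {f : α → ℝ}
    {ℓ : α → α → ℝ} {z : ℕ → α} {η : ℕ → ℝ} (hzF : ∀ i, z i ∈ F) (htight : ∀ w, ℓ w w = f w)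
    (hfeas : ∀ i, 1 ≤ i → ∀ τ < i, η i ≥ ℓ (z τ) (z i)) :
    ∃ i, 1 ≤ i ∧ i ≤ F.card ∧ f (z i) ≤ η i := by
  obtain ⟨τ, i, hτi, hi, hrepeat⟩ := Finset.exists_lt_le_card_eq_of_forall_mem hzF
  refine ⟨i, by omega, hi, ?_⟩
  calc f (z i) = ℓ (z τ) (z i) := by rw [hrepeat, htight]
    _ ≤ η i := hfeas i (by omega) τ hτi

theorem cutting_plane_terminates_correct_general (n : ℕ)
    (F : Finset (Fin n → ℝ))
    (c : (Fin n → ℝ) → ℝ) (g : (Fin n → ℝ) → (Fin n → ℝ))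
    (hsub : ∀ z ∈ F, ∀ w ∈ F, c z ≥ c w + g w ⬝ᵥ (z - w))
    (z : ℕ → (Fin n → ℝ)) (η : ℕ → ℝ)
    (hzF : ∀ i, z i ∈ F)
    (hfeas : ∀ i, 1 ≤ i → ∀ τ < i, η i ≥ c (z τ) + g (z τ) ⬝ᵥ (z i - z τ))
    (hmin : ∀ i, 1 ≤ i → ∀ z' ∈ F, ∀ η' : ℝ,
      (∀ τ < i, η' ≥ c (z τ) + g (z τ) ⬝ᵥ (z' - z τ)) → η i ≤ η') :
    (∃ i, 1 ≤ i ∧ i ≤ F.card ∧ c (z i) ≤ η i) ∧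
    (∀ i, 1 ≤ i → c (z i) ≤ η i → ∀ w ∈ F, c (z i) ≤ c w) := by
  refine ⟨exists_le_card_le_of_cut_tight (ℓ := fun w x => c w + g w ⬝ᵥ (x - w)) hzF
    (fun w => by simp) hfeas, fun i hi hstop w hw => ?_⟩
  exact hstop.trans (hmin i hi w hw (c w) fun τ _ => hsub w hw (z τ) (hzF τ))

theorem cutting_plane_terminates_correct (n : ℕ)
    (F : Finset (Fin n → ℝ)) (hF : F.Nonempty)
    (c : (Fin n → ℝ) → ℝ) (g : (Fin n → ℝ) → (Fin n → ℝ))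
    (hsub : ∀ z ∈ F, ∀ w ∈ F, c z ≥ c w + g w ⬝ᵥ (z - w))
    (z : ℕ → (Fin n → ℝ)) (η : ℕ → ℝ)
    (hzF : ∀ i, z i ∈ F)
    (hfeas : ∀ i, 1 ≤ i → ∀ τ < i, η i ≥ c (z τ) + g (z τ) ⬝ᵥ (z i - z τ))
    (hmin : ∀ i, 1 ≤ i → ∀ z' ∈ F, ∀ η' : ℝ,
      (∀ τ < i, η' ≥ c (z τ) + g (z τ) ⬝ᵥ (z' - z τ)) → η i ≤ η') :
    (∃ i, 1 ≤ i ∧ i ≤ F.card ∧ c (z i) ≤ η i) ∧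
    (∀ i, 1 ≤ i → c (z i) ≤ η i → ∀ w ∈ F, c (z i) ≤ c w) :=
  cutting_plane_terminates_correct_general n F c g hsub z η hzF hfeas hmin
end
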